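/- arXiv:1701.04582 — 2 statements merged into one kernel-verified Lean document; each statement's English description precedes it below -/
import Mathlib

section
/- Let A be a bivariate copula and let μ be a probability measure on [0,1]² whose distribution function is A. Suppose that [M,A] > 1/4 where [C,A] := ∫_{[0,1]²} C dμ, and that the map κ_A[C] := ([C,A] − [Π,A])/([M,A] − [Π,A]) satisfies the measure-of-concordance axioms: κ_A[M] = 1, κ_A[π(C)] = κ_A[C] for every copula C, and κ_A[ν₁(C)] = −κ_A[C] for every copula C, where (π(C))(u,v) := C(v,u) and (ν₁(C))(u,v) := v − C(1−u,v). Then A is Γ-invariant, i.e. A(u,v) = A(v,u) and A(u,v) = v − A(1−u,v) for all u,v ∈ [0,1]. -/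
open MeasureTheory Set

/-- A bivariate copula on [0,1]², encoded as a function `ℝ → ℝ → ℝ` whose
defining properties are required on the unit square. -/
def IsCopula (C : ℝ → ℝ → ℝ) : Prop :=
  (∀ u ∈ Icc (0:ℝ) 1, C u 0 = 0) ∧
  (∀ v ∈ Icc (0:ℝ) 1, C 0 v = 0) ∧
  (∀ u ∈ Icc (0:ℝ) 1, C u 1 = u) ∧
  (∀ v ∈ Icc (0:ℝ) 1, C 1 v = v) ∧
  (∀ u₁ u₂ v₁ v₂ : ℝ, u₁ ∈ Icc (0:ℝ) 1 → u₂ ∈ Icc (0:ℝ) 1 → v₁ ∈ Icc (0:ℝ) 1 →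
    v₂ ∈ Icc (0:ℝ) 1 → u₁ ≤ u₂ → v₁ ≤ v₂ →
    0 ≤ C u₂ v₂ - C u₂ v₁ - C u₁ v₂ + C u₁ v₁) ∧
  (∀ u ∈ Icc (0:ℝ) 1, ∀ v ∈ Icc (0:ℝ) 1, C u v ∈ Icc (0:ℝ) 1)

/-- Γ-invariance of a bivariate copula: invariance under the transposition and
the partial reflection ν₁. -/
def IsGammaInvariant (C : ℝ → ℝ → ℝ) : Prop :=
  ∀ u ∈ Icc (0:ℝ) 1, ∀ v ∈ Icc (0:ℝ) 1,
    C u v = C v u ∧ C u v = v - C (1 - u) v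

/-- The unit square in ℝ². -/
def unitSquare : Set (ℝ × ℝ) := Icc (0:ℝ) 1 ×ˢ Icc (0:ℝ) 1

/-- `μ` is a measure on [0,1]² whose distribution function is `A`. -/
def IsDistributionOf (μ : Measure (ℝ × ℝ)) (A : ℝ → ℝ → ℝ) : Prop :=
  ∀ u ∈ Icc (0:ℝ) 1, ∀ v ∈ Icc (0:ℝ) 1,
    μ (Icc (0:ℝ) u ×ˢ Icc (0:ℝ) v) = ENNReal.ofReal (A u v)

/-- The biconvex form `[C, A]` where `μ` is the measure associated with `A`. -/
noncomputable def biForm (μ : Measure (ℝ × ℝ)) (C : ℝ → ℝ → ℝ) : ℝ :=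
  ∫ p in unitSquare, C p.1 p.2 ∂μ

/-!
Clearing the nonzero denominator of `κ_A`, the axioms say that `C ↦ [C, A]` is invariant under
transposition and that `[ν₁ C, A] + [C, A] = 2 [Π, A]`. Testing this on the copulas
`Π + t φ ⊗ ψ`, with `φ, ψ` Lipschitz, vanishing at `0` and `1`, and `t > 0` small, gives
`∫ ψ(x) φ(y) dμ = ∫ φ(x) ψ(y) dμ` and `∫ φ(1 - x) ψ(y) dμ = ∫ φ(x) ψ(y) dμ` over the unit square.
Letting `φ, ψ` run through the trapezoids `tent a n`, `tent b n`, which converge pointwise to the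
indicators of `(0, a]` and `(0, b]`, dominated convergence turns these into `A(b, a) = A(a, b)`
and `b - A(1 - a, b) = A(a, b)` for `a, b ∈ (0, 1)`; the second uses that vertical lines are
`μ`-null, which follows from `A(u, 1) = u`. On the boundary of the square both identities are the
boundary conditions of copulas.
-/

open Filter Topology
open scoped NNReal

lemma IsCopula.of_boundary {C : ℝ → ℝ → ℝ}
    (h_u0 : ∀ u ∈ Icc (0:ℝ) 1, C u 0 = 0) (h_0v : ∀ v ∈ Icc (0:ℝ) 1, C 0 v = 0)
    (h_u1 : ∀ u ∈ Icc (0:ℝ) 1, C u 1 = u) (h_1v : ∀ v ∈ Icc (0:ℝ) 1, C 1 v = v)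
    (h_inc : ∀ u₁ u₂ v₁ v₂ : ℝ, u₁ ∈ Icc (0:ℝ) 1 → u₂ ∈ Icc (0:ℝ) 1 → v₁ ∈ Icc (0:ℝ) 1 →
      v₂ ∈ Icc (0:ℝ) 1 → u₁ ≤ u₂ → v₁ ≤ v₂ → 0 ≤ C u₂ v₂ - C u₂ v₁ - C u₁ v₂ + C u₁ v₁) :
    IsCopula C := by
  have h0 : (0:ℝ) ∈ Icc (0:ℝ) 1 := left_mem_Icc.2 zero_le_one
  have h1 : (1:ℝ) ∈ Icc (0:ℝ) 1 := right_mem_Icc.2 zero_le_one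
  refine ⟨h_u0, h_0v, h_u1, h_1v, h_inc, fun u hu v hv => ⟨?_, ?_⟩⟩
  · linarith [h_inc 0 u 0 v h0 hu h0 hv hu.1 hv.1, h_u0 u hu, h_0v v hv, h_0v 0 h0]
  · linarith [h_inc 0 u v 1 h0 hu hv h1 hu.1 hv.2, h_u1 u hu, h_0v v hv, h_0v 1 h1, hu.2]

lemma IsCopula.swap {C : ℝ → ℝ → ℝ} (hC : IsCopula C) : IsCopula fun u v => C v u := by
  obtain ⟨h_u0, h_0v, h_u1, h_1v, h_inc, -⟩ := hC
  exact .of_boundary h_0v h_u0 h_1v h_u1 fun u₁ u₂ v₁ v₂ hu₁ hu₂ hv₁ hv₂ hu hv => by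
    linarith [h_inc v₁ v₂ u₁ u₂ hv₁ hv₂ hu₁ hu₂ hv hu]

lemma IsCopula.reflect {C : ℝ → ℝ → ℝ} (hC : IsCopula C) :
    IsCopula fun u v => v - C (1 - u) v := by
  obtain ⟨h_u0, h_0v, h_u1, h_1v, h_inc, -⟩ := hC
  have h_refl {u : ℝ} (hu : u ∈ Icc (0:ℝ) 1) : 1 - u ∈ Icc (0:ℝ) 1 :=
    ⟨by linarith [hu.2], by linarith [hu.1]⟩
  refine .of_boundary (fun u hu => ?_) (fun v hv => ?_) (fun u hu => ?_) (fun v hv => ?_)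
    fun u₁ u₂ v₁ v₂ hu₁ hu₂ hv₁ hv₂ hu hv => ?_
  · simp [h_u0 _ (h_refl hu)]
  · simp [h_1v v hv]
  · simp [h_u1 _ (h_refl hu)]
  · simp [h_0v v hv]
  · linarith [h_inc (1 - u₂) (1 - u₁) v₁ v₂ (h_refl hu₂) (h_refl hu₁) hv₁ hv₂ (by linarith) hv]

lemma IsCopula.eq_of_eqOn_Ioo {C D : ℝ → ℝ → ℝ} (hC : IsCopula C) (hD : IsCopula D)
    (h : ∀ u ∈ Ioo (0:ℝ) 1, ∀ v ∈ Ioo (0:ℝ) 1, C u v = D u v) :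
    ∀ u ∈ Icc (0:ℝ) 1, ∀ v ∈ Icc (0:ℝ) 1, C u v = D u v := by
  intro u hu v hv
  rcases hu.1.eq_or_lt with rfl | hu₀
  · rw [hC.2.1 v hv, hD.2.1 v hv]
  rcases hu.2.eq_or_lt with rfl | hu₁
  · rw [hC.2.2.2.1 v hv, hD.2.2.2.1 v hv]
  rcases hv.1.eq_or_lt with rfl | hv₀
  · rw [hC.1 u hu, hD.1 u hu]
  rcases hv.2.eq_or_lt with rfl | hv₁
  · rw [hC.2.2.1 u hu, hD.2.2.1 u hu]
  exact h u ⟨hu₀, hu₁⟩ v ⟨hv₀, hv₁⟩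

lemma isCopula_mul_add_mul_mul {φ ψ : ℝ → ℝ} {K L : ℝ≥0} (hφ : LipschitzWith K φ)
    (hψ : LipschitzWith L ψ) (hφ₀ : φ 0 = 0) (hφ₁ : φ 1 = 0) (hψ₀ : ψ 0 = 0) (hψ₁ : ψ 1 = 0)
    {t : ℝ} (ht : |t| * (K * L) ≤ 1) : IsCopula fun u v => u * v + t * (φ u * ψ v) := by
  refine .of_boundary (by simp [hψ₀]) (by simp [hφ₀]) (by simp [hψ₁]) (by simp [hφ₁])
    fun u₁ u₂ v₁ v₂ _ _ _ _ hu hv => ?_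
  have hφu : |φ u₂ - φ u₁| ≤ K * (u₂ - u₁) := by
    simpa [Real.dist_eq, abs_of_nonneg (sub_nonneg.2 hu)] using hφ.dist_le_mul u₂ u₁
  have hψv : |ψ v₂ - ψ v₁| ≤ L * (v₂ - v₁) := by
    simpa [Real.dist_eq, abs_of_nonneg (sub_nonneg.2 hv)] using hψ.dist_le_mul v₂ v₁
  have hpert : -(t * ((φ u₂ - φ u₁) * (ψ v₂ - ψ v₁))) ≤ (u₂ - u₁) * (v₂ - v₁) :=
    calc -(t * ((φ u₂ - φ u₁) * (ψ v₂ - ψ v₁)))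
        ≤ |t| * (|φ u₂ - φ u₁| * |ψ v₂ - ψ v₁|) := by rw [← abs_mul, ← abs_mul]; exact neg_le_abs _
      _ ≤ |t| * ((K * (u₂ - u₁)) * (L * (v₂ - v₁))) := by gcongr
      _ = (|t| * (K * L)) * ((u₂ - u₁) * (v₂ - v₁)) := by ring
      _ ≤ (u₂ - u₁) * (v₂ - v₁) :=
        mul_le_of_le_one_left (mul_nonneg (sub_nonneg.2 hu) (sub_nonneg.2 hv)) ht
  linear_combination hpert

lemma exists_pos_isCopula_mul_add_mul_mul {φ ψ : ℝ → ℝ} {K L : ℝ≥0} (hφ : LipschitzWith K φ)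
    (hψ : LipschitzWith L ψ) (hφ₀ : φ 0 = 0) (hφ₁ : φ 1 = 0) (hψ₀ : ψ 0 = 0) (hψ₁ : ψ 1 = 0) :
    ∃ t : ℝ, 0 < t ∧ IsCopula fun u v => u * v + t * (φ u * ψ v) := by
  refine ⟨1 / (K * L + 1), by positivity, isCopula_mul_add_mul_mul hφ hψ hφ₀ hφ₁ hψ₀ hψ₁ ?_⟩
  rw [abs_of_pos (by positivity), div_mul_eq_mul_div, one_mul, div_le_one (by positivity)]
  linarith

lemma isCompact_unitSquare : IsCompact unitSquare := isCompact_Icc.prod isCompact_Icc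

lemma biForm_mul_add_mul_mul (μ : Measure (ℝ × ℝ)) [IsFiniteMeasure μ] {φ ψ : ℝ → ℝ}
    (hφ : Continuous φ) (hψ : Continuous ψ) (t : ℝ) :
    biForm μ (fun u v => u * v + t * (φ u * ψ v)) =
      biForm μ (fun u v => u * v) + t * ∫ p in unitSquare, φ p.1 * ψ p.2 ∂μ := by
  rw [biForm, integral_add, integral_const_mul, biForm]
  · exact (continuous_fst.mul continuous_snd).continuousOn.integrableOn_compact isCompact_unitSquare
  · exact (continuous_const.mul ((hφ.comp continuous_fst).mul
      (hψ.comp continuous_snd))).continuousOn.integrableOn_compact isCompact_unitSquare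

section PerturbationIdentities

variable {μ : Measure (ℝ × ℝ)} [IsFiniteMeasure μ] {φ ψ : ℝ → ℝ} {K L : ℝ≥0}

lemma setIntegral_mul_comm_of_biForm_swap
    (hswap : ∀ C, IsCopula C → biForm μ (fun u v => C v u) = biForm μ C)
    (hφ : LipschitzWith K φ) (hψ : LipschitzWith L ψ)
    (hφ₀ : φ 0 = 0) (hφ₁ : φ 1 = 0) (hψ₀ : ψ 0 = 0) (hψ₁ : ψ 1 = 0) :
    ∫ p in unitSquare, ψ p.1 * φ p.2 ∂μ = ∫ p in unitSquare, φ p.1 * ψ p.2 ∂μ := by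
  obtain ⟨t, ht₀, hC⟩ := exists_pos_isCopula_mul_add_mul_mul hφ hψ hφ₀ hφ₁ hψ₀ hψ₁
  have h := hswap _ hC
  have hcomm : (fun u v : ℝ => v * u + t * (φ v * ψ u)) = fun u v => u * v + t * (ψ u * φ v) := by
    funext u v; ring
  rw [hcomm, biForm_mul_add_mul_mul μ hψ.continuous hφ.continuous,
    biForm_mul_add_mul_mul μ hφ.continuous hψ.continuous] at h
  exact mul_left_cancel₀ ht₀.ne' (add_left_cancel h)

lemma setIntegral_comp_one_sub_mul_of_biForm_reflect
    (hrefl : ∀ C, IsCopula C →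
      biForm μ (fun u v => v - C (1 - u) v) + biForm μ C = 2 * biForm μ (fun u v => u * v))
    (hφ : LipschitzWith K φ) (hψ : LipschitzWith L ψ)
    (hφ₀ : φ 0 = 0) (hφ₁ : φ 1 = 0) (hψ₀ : ψ 0 = 0) (hψ₁ : ψ 1 = 0) :
    ∫ p in unitSquare, φ (1 - p.1) * ψ p.2 ∂μ = ∫ p in unitSquare, φ p.1 * ψ p.2 ∂μ := by
  obtain ⟨t, ht₀, hC⟩ := exists_pos_isCopula_mul_add_mul_mul hφ hψ hφ₀ hφ₁ hψ₀ hψ₁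
  have h := hrefl _ hC
  have hφ' : Continuous fun x => φ (1 - x) :=
    hφ.continuous.comp (continuous_const.sub continuous_id)
  have hrefl' : (fun u v : ℝ => v - ((1 - u) * v + t * (φ (1 - u) * ψ v))) =
      fun u v => u * v + -t * ((fun x => φ (1 - x)) u * ψ v) := by
    funext u v; ring
  rw [hrefl', biForm_mul_add_mul_mul μ hφ' hψ.continuous,
    biForm_mul_add_mul_mul μ hφ.continuous hψ.continuous] at h
  exact mul_left_cancel₀ ht₀.ne' (by linarith)

end PerturbationIdentities

namespace IsDistributionOf

variable {μ : Measure (ℝ × ℝ)} {A : ℝ → ℝ → ℝ}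

lemma measureReal_Icc_prod_Icc (hdist : IsDistributionOf μ A) (hA : IsCopula A) {u v : ℝ}
    (hu : u ∈ Icc (0:ℝ) 1) (hv : v ∈ Icc (0:ℝ) 1) : μ.real (Icc 0 u ×ˢ Icc 0 v) = A u v := by
  rw [measureReal_def, hdist u hu v hv, ENNReal.toReal_ofReal (hA.2.2.2.2.2 u hu v hv).1]

lemma measure_Icc_prod_singleton_zero (hdist : IsDistributionOf μ A) (hA : IsCopula A) :
    μ (Icc 0 1 ×ˢ {0}) = 0 := by
  have h₀ : (0:ℝ) ∈ Icc (0:ℝ) 1 := left_mem_Icc.2 zero_le_one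
  have h₁ : (1:ℝ) ∈ Icc (0:ℝ) 1 := right_mem_Icc.2 zero_le_one
  refine measure_mono_null (t := Icc 0 1 ×ˢ Icc 0 0) (prod_mono subset_rfl (by simp)) ?_
  rw [hdist 1 h₁ 0 h₀, hA.1 1 h₁, ENNReal.ofReal_zero]

variable [IsFiniteMeasure μ]

lemma measureReal_Ioc_prod_Icc (hdist : IsDistributionOf μ A) (hA : IsCopula A) {x₁ x₂ y : ℝ}
    (hx₁ : 0 ≤ x₁) (hx : x₁ ≤ x₂) (hx₂ : x₂ ≤ 1) (hy : y ∈ Icc (0:ℝ) 1) :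
    μ.real (Ioc x₁ x₂ ×ˢ Icc 0 y) = A x₂ y - A x₁ y := by
  have hdiff : Ioc x₁ x₂ ×ˢ Icc 0 y = Icc 0 x₂ ×ˢ Icc 0 y \ Icc 0 x₁ ×ˢ Icc 0 y := by
    ext ⟨x, y'⟩
    grind
  rw [hdiff, measureReal_sdiff (prod_mono (Icc_subset_Icc_right hx) subset_rfl)
      (measurableSet_Icc.prod measurableSet_Icc),
    hdist.measureReal_Icc_prod_Icc hA ⟨hx₁.trans hx, hx₂⟩ hy,
    hdist.measureReal_Icc_prod_Icc hA ⟨hx₁, hx.trans hx₂⟩ hy]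

lemma measure_singleton_prod_Icc (hdist : IsDistributionOf μ A) (hA : IsCopula A) {c : ℝ}
    (hc : c ∈ Icc (0:ℝ) 1) : μ ({c} ×ˢ Icc 0 1) = 0 := by
  have h₁ : (1:ℝ) ∈ Icc (0:ℝ) 1 := right_mem_Icc.2 zero_le_one
  rw [← measureReal_eq_zero_iff]
  refine le_antisymm (le_of_forall_pos_le_add fun ε hε => ?_) measureReal_nonneg
  rcases hc.1.eq_or_lt with rfl | hc₀
  · calc μ.real ({0} ×ˢ Icc 0 1) ≤ μ.real (Icc 0 0 ×ˢ Icc 0 1) :=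
          measureReal_mono (prod_mono (by simp) subset_rfl)
      _ = 0 := by rw [hdist.measureReal_Icc_prod_Icc hA hc h₁, hA.2.1 1 h₁]
      _ ≤ 0 + ε := by linarith
  · set δ := min c ε
    have hδ : 0 < δ := lt_min hc₀ hε
    calc μ.real ({c} ×ˢ Icc 0 1) ≤ μ.real (Ioc (c - δ) c ×ˢ Icc 0 1) :=
          measureReal_mono (prod_mono (singleton_subset_iff.2 ⟨by linarith, le_rfl⟩) subset_rfl)
      _ = A c 1 - A (c - δ) 1 :=
          hdist.measureReal_Ioc_prod_Icc hA (by linarith [min_le_left c ε]) (by linarith) hc.2 h₁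
      _ = δ := by
          rw [hA.2.2.1 c hc, hA.2.2.1 _ ⟨by linarith [min_le_left c ε], by linarith [hc.2]⟩]
          ring
      _ ≤ 0 + ε := by linarith [min_le_right c ε]

lemma measureReal_Ioc_prod_Ioc (hdist : IsDistributionOf μ A) (hA : IsCopula A) {a b : ℝ}
    (ha : a ∈ Icc (0:ℝ) 1) (hb : b ∈ Icc (0:ℝ) 1) : μ.real (Ioc 0 a ×ˢ Ioc 0 b) = A a b := by
  have hae : Ioc 0 a ×ˢ Ioc 0 b =ᵐ[μ] Ioc 0 a ×ˢ Icc 0 b := by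
    refine ae_eq_set.2 ⟨measure_mono_null ?_ (hdist.measure_Icc_prod_singleton_zero hA),
      measure_mono_null ?_ (hdist.measure_Icc_prod_singleton_zero hA)⟩
    all_goals
      rintro ⟨x, y⟩
      grind
  rw [measureReal_congr hae, hdist.measureReal_Ioc_prod_Icc hA le_rfl ha.1 ha.2 hb, hA.2.1 b hb,
    sub_zero]

lemma measureReal_Ico_prod_Ioc (hdist : IsDistributionOf μ A) (hA : IsCopula A) {c b : ℝ}
    (hc : c ∈ Ico (0:ℝ) 1) (hb : b ∈ Icc (0:ℝ) 1) :
    μ.real (Ico c 1 ×ˢ Ioc 0 b) = b - A c b := by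
  have hnull : μ ({c} ×ˢ Icc 0 1 ∪ {1} ×ˢ Icc 0 1 ∪ Icc 0 1 ×ˢ {0}) = 0 :=
    measure_union_null (measure_union_null
      (hdist.measure_singleton_prod_Icc hA (Ico_subset_Icc_self hc))
      (hdist.measure_singleton_prod_Icc hA (right_mem_Icc.2 zero_le_one)))
      (hdist.measure_Icc_prod_singleton_zero hA)
  have hae : Ico c 1 ×ˢ Ioc 0 b =ᵐ[μ] Ioc c 1 ×ˢ Icc 0 b := by
    refine ae_eq_set.2 ⟨measure_mono_null ?_ hnull, measure_mono_null ?_ hnull⟩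
    all_goals
      rintro ⟨x, y⟩
      grind
  rw [measureReal_congr hae, hdist.measureReal_Ioc_prod_Icc hA hc.1 hc.2.le le_rfl hb,
    hA.2.2.2.1 b hb]

end IsDistributionOf

noncomputable def tent (a : ℝ) (n : ℕ) (u : ℝ) : ℝ :=
  max 0 (min ((n:ℝ) * u) (min 1 ((n:ℝ) * (a - u) + 1)))

lemma abs_tent_le_one (a : ℝ) (n : ℕ) (u : ℝ) : |tent a n u| ≤ 1 := by
  rw [abs_of_nonneg (le_max_left _ _)]
  exact max_le zero_le_one ((min_le_right _ _).trans (min_le_left _ _))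

lemma tent_zero (a : ℝ) (n : ℕ) : tent a n 0 = 0 := by
  simp [tent]

lemma lipschitzWith_tent (a : ℝ) (n : ℕ) : LipschitzWith n (tent a n) := by
  have hup : LipschitzWith n fun u : ℝ => (n:ℝ) * u :=
    .of_dist_le_mul fun x y => by simp [Real.dist_eq, ← mul_sub, abs_mul]
  have hdown : LipschitzWith n fun u : ℝ => (n:ℝ) * (a - u) + 1 :=
    .of_dist_le_mul fun x y => by
      simp [Real.dist_eq, show (n:ℝ) * (a - x) - n * (a - y) = n * (y - x) by ring, abs_mul,
        abs_sub_comm]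
  unfold tent
  simpa only [max_self] using (hup.min (hdown.const_min 1)).const_max 0

lemma eventually_one_le_natCast_mul {c : ℝ} (hc : 0 < c) : ∀ᶠ n : ℕ in atTop, 1 ≤ (n:ℝ) * c :=
  (tendsto_natCast_atTop_atTop.atTop_mul_const hc).eventually_ge_atTop 1

lemma eventually_tent_eq_indicator (a u : ℝ) :
    (fun n : ℕ => tent a n u) =ᶠ[atTop] fun _ => (Ioc 0 a).indicator 1 u := by
  rcases le_or_gt u 0 with hu | hu
  · refine .of_eq (funext fun n => ?_)
    have : (n:ℝ) * u ≤ 0 := mul_nonpos_of_nonneg_of_nonpos n.cast_nonneg hu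
    simp [tent, indicator_of_notMem (fun h : u ∈ Ioc 0 a => hu.not_gt h.1),
      min_le_of_left_le this]
  rcases le_or_gt u a with hua | hua
  · filter_upwards [eventually_one_le_natCast_mul hu] with n hn
    have : 0 ≤ (n:ℝ) * (a - u) := mul_nonneg n.cast_nonneg (sub_nonneg.2 hua)
    rw [indicator_of_mem (show u ∈ Ioc 0 a from ⟨hu, hua⟩), tent,
      min_eq_left (by linarith : (1:ℝ) ≤ _), min_eq_right hn, max_eq_right zero_le_one, Pi.one_apply]
  · filter_upwards [eventually_one_le_natCast_mul (sub_pos.2 hua)] with n hn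
    have : (n:ℝ) * (a - u) + 1 ≤ 0 := by linarith [show (n:ℝ) * (a - u) = -(n * (u - a)) by ring]
    simp [tent, indicator_of_notMem (fun h : u ∈ Ioc 0 a => hua.not_ge h.2),
      min_le_of_right_le (min_le_of_right_le this)]

lemma tendsto_tent (a u : ℝ) :
    Tendsto (fun n : ℕ => tent a n u) atTop (𝓝 ((Ioc 0 a).indicator 1 u)) :=
  tendsto_const_nhds.congr' (eventually_tent_eq_indicator a u).symm

lemma indicator_Ioc_one_sub (a x : ℝ) :
    (Ioc 0 a).indicator (1 : ℝ → ℝ) (1 - x) = (Ico (1 - a) 1).indicator 1 x := by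
  simp only [indicator_apply, Pi.one_apply]
  grind

lemma eventually_tent_one {a : ℝ} (ha : a < 1) : ∀ᶠ n : ℕ in atTop, tent a n 1 = 0 :=
  (eventually_tent_eq_indicator a 1).mono fun _ h =>
    h.trans (indicator_of_notMem (fun h₁ : (1:ℝ) ∈ Ioc 0 a => ha.not_ge h₁.2) _)

lemma tendsto_integral_of_tendsto_indicator {α : Type*} [MeasurableSpace α] {ν : Measure α}
    [IsFiniteMeasure ν] {F : ℕ → α → ℝ} {s : Set α} (hs : MeasurableSet s)
    (hF : ∀ n, AEStronglyMeasurable (F n) ν) (hF_le : ∀ n x, |F n x| ≤ 1)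
    (hF_lim : ∀ x, Tendsto (fun n => F n x) atTop (𝓝 (s.indicator 1 x))) :
    Tendsto (fun n => ∫ x, F n x ∂ν) atTop (𝓝 (ν.real s)) := by
  rw [← integral_indicator_one hs]
  exact tendsto_integral_of_dominated_convergence (fun _ => 1) hF (integrable_const 1)
    (fun n => .of_forall fun x => by simpa using hF_le n x) (.of_forall hF_lim)

lemma tendsto_setIntegral_unitSquare_mul {μ : Measure (ℝ × ℝ)} [IsFiniteMeasure μ]
    {f g : ℕ → ℝ → ℝ} {s t : Set ℝ} (hs : MeasurableSet s) (ht : MeasurableSet t)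
    (hst : s ×ˢ t ⊆ unitSquare) (hf : ∀ n, Continuous (f n)) (hg : ∀ n, Continuous (g n))
    (hf_le : ∀ n x, |f n x| ≤ 1) (hg_le : ∀ n y, |g n y| ≤ 1)
    (hf_lim : ∀ x, Tendsto (fun n => f n x) atTop (𝓝 (s.indicator 1 x)))
    (hg_lim : ∀ y, Tendsto (fun n => g n y) atTop (𝓝 (t.indicator 1 y))) :
    Tendsto (fun n => ∫ p in unitSquare, f n p.1 * g n p.2 ∂μ) atTop (𝓝 (μ.real (s ×ˢ t))) := by
  have h := tendsto_integral_of_tendsto_indicator (ν := μ.restrict unitSquare)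
    (F := fun n p => f n p.1 * g n p.2) (hs.prod ht)
    (fun n => ((hf n).comp continuous_fst).mul ((hg n).comp continuous_snd) |>.aestronglyMeasurable)
    (fun n p => by rw [abs_mul]; exact mul_le_one₀ (hf_le n p.1) (abs_nonneg _) (hg_le n p.2))
    (fun p => by rw [indicator_prod_one]; exact (hf_lim p.1).mul (hg_lim p.2))
  rwa [measureReal_restrict_apply (hs.prod ht), inter_eq_left.2 hst] at h

section Limits

variable {μ : Measure (ℝ × ℝ)} [IsFiniteMeasure μ] {A : ℝ → ℝ → ℝ}

lemma tendsto_setIntegral_tent_mul_tent (hdist : IsDistributionOf μ A) (hA : IsCopula A)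
    {a b : ℝ} (ha : a ∈ Icc (0:ℝ) 1) (hb : b ∈ Icc (0:ℝ) 1) :
    Tendsto (fun n => ∫ p in unitSquare, tent a n p.1 * tent b n p.2 ∂μ) atTop (𝓝 (A a b)) := by
  rw [← hdist.measureReal_Ioc_prod_Ioc hA ha hb]
  exact tendsto_setIntegral_unitSquare_mul measurableSet_Ioc measurableSet_Ioc
    (prod_mono (Ioc_subset_Icc_self.trans (Icc_subset_Icc_right ha.2))
      (Ioc_subset_Icc_self.trans (Icc_subset_Icc_right hb.2)))
    (fun n => (lipschitzWith_tent a n).continuous) (fun n => (lipschitzWith_tent b n).continuous)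
    (abs_tent_le_one a) (abs_tent_le_one b) (tendsto_tent a) (tendsto_tent b)

lemma tendsto_setIntegral_tent_one_sub_mul_tent (hdist : IsDistributionOf μ A)
    (hA : IsCopula A) {a b : ℝ} (ha : a ∈ Ioc (0:ℝ) 1) (hb : b ∈ Icc (0:ℝ) 1) :
    Tendsto (fun n => ∫ p in unitSquare, tent a n (1 - p.1) * tent b n p.2 ∂μ) atTop
      (𝓝 (b - A (1 - a) b)) := by
  rw [← hdist.measureReal_Ico_prod_Ioc hA ⟨by linarith [ha.2], by linarith [ha.1]⟩ hb]
  refine tendsto_setIntegral_unitSquare_mul measurableSet_Ico measurableSet_Ioc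
    (prod_mono (Ico_subset_Icc_self.trans (Icc_subset_Icc_left (by linarith [ha.2])))
      (Ioc_subset_Icc_self.trans (Icc_subset_Icc_right hb.2)))
    (fun n => (lipschitzWith_tent a n).continuous.comp (continuous_const.sub continuous_id))
    (fun n => (lipschitzWith_tent b n).continuous)
    (fun n x => abs_tent_le_one a n (1 - x)) (abs_tent_le_one b) (fun x => ?_) (tendsto_tent b)
  rw [← indicator_Ioc_one_sub]
  exact tendsto_tent a (1 - x)

lemma IsDistributionOf.apply_comm_of_biForm_swap (hdist : IsDistributionOf μ A)
    (hA : IsCopula A) (hswap : ∀ C, IsCopula C → biForm μ (fun u v => C v u) = biForm μ C) :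
    ∀ a ∈ Ioo (0:ℝ) 1, ∀ b ∈ Ioo (0:ℝ) 1, A a b = A b a := by
  intro a ha b hb
  refine tendsto_nhds_unique
    (tendsto_setIntegral_tent_mul_tent hdist hA (Ioo_subset_Icc_self ha) (Ioo_subset_Icc_self hb))
    ((tendsto_setIntegral_tent_mul_tent hdist hA (Ioo_subset_Icc_self hb)
      (Ioo_subset_Icc_self ha)).congr' ?_)
  filter_upwards [eventually_tent_one ha.2, eventually_tent_one hb.2] with n ha₁ hb₁
  exact setIntegral_mul_comm_of_biForm_swap hswap (lipschitzWith_tent a n)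
    (lipschitzWith_tent b n) (tent_zero a n) ha₁ (tent_zero b n) hb₁

lemma IsDistributionOf.apply_eq_sub_of_biForm_reflect (hdist : IsDistributionOf μ A)
    (hA : IsCopula A) (hrefl : ∀ C, IsCopula C →
      biForm μ (fun u v => v - C (1 - u) v) + biForm μ C = 2 * biForm μ (fun u v => u * v)) :
    ∀ a ∈ Ioo (0:ℝ) 1, ∀ b ∈ Ioo (0:ℝ) 1, A a b = b - A (1 - a) b := by
  intro a ha b hb
  refine tendsto_nhds_unique
    (tendsto_setIntegral_tent_mul_tent hdist hA (Ioo_subset_Icc_self ha) (Ioo_subset_Icc_self hb))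
    ((tendsto_setIntegral_tent_one_sub_mul_tent hdist hA (Ioo_subset_Ioc_self ha)
      (Ioo_subset_Icc_self hb)).congr' ?_)
  filter_upwards [eventually_tent_one ha.2, eventually_tent_one hb.2] with n ha₁ hb₁
  exact setIntegral_comp_one_sub_mul_of_biForm_reflect hrefl (lipschitzWith_tent a n)
    (lipschitzWith_tent b n) (tent_zero a n) ha₁ (tent_zero b n) hb₁

end Limits

theorem stmt3_general (A : ℝ → ℝ → ℝ) (μ : MeasureTheory.Measure (ℝ × ℝ))
    (hA : IsCopula A)
    (hμ : MeasureTheory.IsProbabilityMeasure μ) (hdist : IsDistributionOf μ A)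
    (κ : (ℝ → ℝ → ℝ) → ℝ)
    (hκ : ∀ C, κ C = (biForm μ C - biForm μ (fun u v => u * v)) /
        (biForm μ (fun u v => min u v) - biForm μ (fun u v => u * v)))
    (h1 : κ (fun u v => min u v) = 1)
    (h2 : ∀ C, IsCopula C → κ (fun u v => C v u) = κ C)
    (h3 : ∀ C, IsCopula C → κ (fun u v => v - C (1 - u) v) = -(κ C)) :
    IsGammaInvariant A := by
  have hden : biForm μ (fun u v => min u v) - biForm μ (fun u v => u * v) ≠ 0 := fun h => by
    simp [hκ, h] at h1
  have hswap (C) (hC : IsCopula C) : biForm μ (fun u v => C v u) = biForm μ C := by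
    have h := h2 C hC
    rw [hκ, hκ, div_left_inj' hden] at h
    linarith
  have hrefl (C) (hC : IsCopula C) :
      biForm μ (fun u v => v - C (1 - u) v) + biForm μ C = 2 * biForm μ (fun u v => u * v) := by
    have h := h3 C hC
    rw [hκ, hκ, ← neg_div, div_left_inj' hden] at h
    linarith
  intro u hu v hv
  exact ⟨hA.eq_of_eqOn_Ioo hA.swap (hdist.apply_comm_of_biForm_swap hA hswap) u hu v hv,
    hA.eq_of_eqOn_Ioo hA.reflect (hdist.apply_eq_sub_of_biForm_reflect hA hrefl) u hu v hv⟩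

theorem stmt3 (A : ℝ → ℝ → ℝ) (μ : MeasureTheory.Measure (ℝ × ℝ))
    (hA : IsCopula A)
    (hμ : MeasureTheory.IsProbabilityMeasure μ) (hdist : IsDistributionOf μ A)
    (hM : biForm μ (fun u v => min u v) > 1/4)
    (κ : (ℝ → ℝ → ℝ) → ℝ)
    (hκ : ∀ C, κ C = (biForm μ C - biForm μ (fun u v => u * v)) /
        (biForm μ (fun u v => min u v) - biForm μ (fun u v => u * v)))
    (h1 : κ (fun u v => min u v) = 1)
    (h2 : ∀ C, IsCopula C → κ (fun u v => C v u) = κ C)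
    (h3 : ∀ C, IsCopula C → κ (fun u v => v - C (1 - u) v) = -(κ C)) :
    IsGammaInvariant A :=
  stmt3_general A μ hA hμ hdist κ hκ h1 h2 h3
end

section
/- Let A be a Γ-invariant bivariate copula, let μ be a probability measure on [0,1]² whose distribution function is A, and define κ_A[C] := ([C,A] − 1/4)/([M,A] − 1/4) with [C,A] := ∫_{[0,1]²} C dμ (the denominator is strictly positive). Then κ_A is continuous: if {C_n} is a sequence of copulas and C is a copula such that C_n(u,v) → C(u,v) for all u,v ∈ [0,1], then κ_A[C_n] → κ_A[C]. -/
open MeasureTheory Set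

/-! Copulas are bounded by `1` and `1`-Lipschitz in each variable, hence measurable on the unit
square, so dominated convergence gives `[Cₙ, A] → [C, A]`; and `κ_A` is an affine function of
`[·, A]`. -/

open Filter Topology

lemma lipschitzOnWith_one_of_sub_mem_Icc {f : ℝ → ℝ} {s : Set ℝ}
    (hf : ∀ a ∈ s, ∀ b ∈ s, a ≤ b → f b - f a ∈ Icc 0 (b - a)) : LipschitzOnWith 1 f s := by
  refine LipschitzOnWith.of_le_add fun x hx y hy => ?_
  rw [Real.dist_eq]
  rcases le_total x y with hxy | hyx
  · linarith [(hf x hx y hy hxy).1, abs_nonneg (x - y)]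
  · linarith [(hf y hy x hx hyx).2, le_abs_self (x - y)]

namespace IsCopula

variable {C : ℝ → ℝ → ℝ}

-- 2-increasingness on the rectangles `[a, b] × [0, v]` and `[a, b] × [v, 1]`.
lemma sub_mem_Icc_left (hC : IsCopula C) {a b v : ℝ} (ha : a ∈ Icc (0:ℝ) 1)
    (hb : b ∈ Icc (0:ℝ) 1) (hv : v ∈ Icc (0:ℝ) 1) (hab : a ≤ b) :
    C b v - C a v ∈ Icc 0 (b - a) := by
  obtain ⟨hbot, -, htop, -, hinc, -⟩ := hC
  have hlow := hinc a b 0 v ha hb (by simp) hv hab hv.1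
  have hhigh := hinc a b v 1 ha hb hv (by simp) hab hv.2
  rw [hbot a ha, hbot b hb] at hlow
  rw [htop a ha, htop b hb] at hhigh
  constructor <;> linarith

lemma sub_mem_Icc_right (hC : IsCopula C) {u a b : ℝ} (hu : u ∈ Icc (0:ℝ) 1)
    (ha : a ∈ Icc (0:ℝ) 1) (hb : b ∈ Icc (0:ℝ) 1) (hab : a ≤ b) :
    C u b - C u a ∈ Icc 0 (b - a) := by
  obtain ⟨-, hbot, -, htop, hinc, -⟩ := hC
  have hlow := hinc 0 u a b (by simp) hu ha hb hu.1 hab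
  have hhigh := hinc u 1 a b hu (by simp) ha hb hu.2 hab
  rw [hbot a ha, hbot b hb] at hlow
  rw [htop a ha, htop b hb] at hhigh
  constructor <;> linarith

lemma lipschitzOnWith_left (hC : IsCopula C) {v : ℝ} (hv : v ∈ Icc (0:ℝ) 1) :
    LipschitzOnWith 1 (fun u => C u v) (Icc 0 1) :=
  lipschitzOnWith_one_of_sub_mem_Icc fun _ ha _ hb hab => hC.sub_mem_Icc_left ha hb hv hab

lemma lipschitzOnWith_right (hC : IsCopula C) {u : ℝ} (hu : u ∈ Icc (0:ℝ) 1) :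
    LipschitzOnWith 1 (fun v => C u v) (Icc 0 1) :=
  lipschitzOnWith_one_of_sub_mem_Icc fun _ ha _ hb hab => hC.sub_mem_Icc_right hu ha hb hab

lemma continuousOn_unitSquare (hC : IsCopula C) :
    ContinuousOn (fun p : ℝ × ℝ => C p.1 p.2) unitSquare :=
  continuousOn_prod_of_continuousOn_lipschitzOnWith _ 1
    (fun _ hu => (hC.lipschitzOnWith_right hu).continuousOn) fun _ hv => hC.lipschitzOnWith_left hv

lemma norm_le_one (hC : IsCopula C) {p : ℝ × ℝ} (hp : p ∈ unitSquare) : ‖C p.1 p.2‖ ≤ 1 := by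
  obtain ⟨h0, h1⟩ := hC.2.2.2.2.2 p.1 hp.1 p.2 hp.2
  rw [Real.norm_eq_abs, abs_le]
  constructor <;> linarith

end IsCopula

lemma measurableSet_unitSquare : MeasurableSet unitSquare :=
  measurableSet_Icc.prod measurableSet_Icc

theorem tendsto_biForm_of_tendsto {μ : Measure (ℝ × ℝ)} [IsFiniteMeasure μ]
    {Cseq : ℕ → ℝ → ℝ → ℝ} {C : ℝ → ℝ → ℝ} (hCseq : ∀ n, IsCopula (Cseq n))
    (hconv : ∀ u ∈ Icc (0:ℝ) 1, ∀ v ∈ Icc (0:ℝ) 1,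
      Tendsto (fun n => Cseq n u v) atTop (𝓝 (C u v))) :
    Tendsto (fun n => biForm μ (Cseq n)) atTop (𝓝 (biForm μ C)) := by
  refine tendsto_integral_of_dominated_convergence (fun _ => 1)
    (fun n => (hCseq n).continuousOn_unitSquare.aestronglyMeasurable measurableSet_unitSquare)
    (integrable_const 1) (fun n => ?_) ?_
  · exact (ae_restrict_iff' measurableSet_unitSquare).2 <| .of_forall fun _ => (hCseq n).norm_le_one
  · exact (ae_restrict_iff' measurableSet_unitSquare).2 <| .of_forall fun p hp =>
      hconv p.1 hp.1 p.2 hp.2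

theorem stmt5_general (μ : MeasureTheory.Measure (ℝ × ℝ))
    (hμ : MeasureTheory.IsProbabilityMeasure μ)
    (κ : (ℝ → ℝ → ℝ) → ℝ)
    (hκ : ∀ C, κ C = (biForm μ C - 1/4) / (biForm μ (fun u v => min u v) - 1/4))
    (Cseq : ℕ → ℝ → ℝ → ℝ) (hCseq : ∀ n, IsCopula (Cseq n))
    (C : ℝ → ℝ → ℝ)
    (hconv : ∀ u ∈ Set.Icc (0:ℝ) 1, ∀ v ∈ Set.Icc (0:ℝ) 1,
      Filter.Tendsto (fun n => Cseq n u v) Filter.atTop (nhds (C u v))) :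
    Filter.Tendsto (fun n => κ (Cseq n)) Filter.atTop (nhds (κ C)) := by
  simp only [hκ]
  exact ((tendsto_biForm_of_tendsto hCseq hconv).sub_const _).div_const _

theorem stmt5 (A : ℝ → ℝ → ℝ) (μ : MeasureTheory.Measure (ℝ × ℝ))
    (hA : IsCopula A) (hinv : IsGammaInvariant A)
    (hμ : MeasureTheory.IsProbabilityMeasure μ) (hdist : IsDistributionOf μ A)
    (κ : (ℝ → ℝ → ℝ) → ℝ)
    (hκ : ∀ C, κ C = (biForm μ C - 1/4) / (biForm μ (fun u v => min u v) - 1/4))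
    (Cseq : ℕ → ℝ → ℝ → ℝ) (hCseq : ∀ n, IsCopula (Cseq n))
    (C : ℝ → ℝ → ℝ) (hC : IsCopula C)
    (hconv : ∀ u ∈ Set.Icc (0:ℝ) 1, ∀ v ∈ Set.Icc (0:ℝ) 1,
      Filter.Tendsto (fun n => Cseq n u v) Filter.atTop (nhds (C u v))) :
    Filter.Tendsto (fun n => κ (Cseq n)) Filter.atTop (nhds (κ C)) :=
  stmt5_general μ hμ κ hκ Cseq hCseq C hconv
end
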